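/- Let (A, ≻, ≺) be a finite-dimensional anti-dendriform algebra and r ∈ A⊗A with r + τ(r) invariant. Set D(r) = r₁₂·r₁₃ + r₂₃≻r₁₂ - r₁₃≺r₂₃, D₁(r) = r₂₃·r₁₂ + r₁₃≻r₂₃ + r₁₂≺r₁₃, and D₂(r) = r₁₃·r₂₃ - r₁₂≻r₁₃ + r₂₃≺r₁₂. Then D(r) = 0 if and only if D₁(r) = 0 and D₂(r) = 0. -/
import Mathlib


open TensorProduct

set_option synthInstance.maxHeartbeats 1000000
set_option maxHeartbeats 1600000

variable {K : Type*} [Field K]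

/-- The anti-dendriform algebra identities for two bilinear operations `s` (≻) and `p` (≺):
`x≻(y≻z) = -(x·y)≻z = -x≺(y·z) = (x≺y)≺z` and `(x≻y)≺z = x≻(y≺z)`, where `x·y = x≻y + x≺y`. -/
def IsAntiDend {M : Type*} [AddCommGroup M] [Module K M]
    (s p : M →ₗ[K] M →ₗ[K] M) : Prop :=
  ∀ x y z : M,
    s x (s y z) = - s (s x y + p x y) z ∧
    s x (s y z) = - p x (s y z + p y z) ∧
    s x (s y z) = p (p x y) z ∧
    p (s x y) z = s x (p y z)

/-- The bilinear map `a ⊗ b ↦ (ζ ↦ ζ(a) • b)` used to define `T_r`. -/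
noncomputable def Tbil {M : Type*} [AddCommGroup M] [Module K M] :
    M →ₗ[K] M →ₗ[K] (Module.Dual K M →ₗ[K] M) :=
  LinearMap.mk₂ K (fun a b => (Module.Dual.eval K M a).smulRight b)
    (fun a a' b => by ext ζ; simp [add_smul])
    (fun c a b => by
      ext ζ
      simp only [LinearMap.smulRight_apply, LinearMap.smul_apply, map_smul,
        Module.Dual.eval_apply, smul_eq_mul, mul_smul])
    (fun a b b' => by ext ζ; simp)
    (fun c a b => by
      ext ζ
      simp only [LinearMap.smulRight_apply, LinearMap.smul_apply]
      exact smul_comm _ _ _)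

/-- `T_r : A* → A`, `⟨T_r ζ, η⟩ = ⟨r, ζ ⊗ η⟩`; concretely `T_r ζ = Σ ζ(aᵢ) • bᵢ`
for `r = Σ aᵢ ⊗ bᵢ`. -/
noncomputable def TmL {M : Type*} [AddCommGroup M] [Module K M] (r : M ⊗[K] M) :
    Module.Dual K M →ₗ[K] M :=
  TensorProduct.lift Tbil r

/-- The flip `τ : A ⊗ A → A ⊗ A`. -/
noncomputable def tau {M : Type*} [AddCommGroup M] [Module K M] (r : M ⊗[K] M) : M ⊗[K] M :=
  TensorProduct.comm K M M r

/-- `r` is invariant: `(R_≺(x)⊗I + I⊗L_·(x)) r = 0` and `(R_·(x)⊗I + I⊗L_≻(x)) r = 0`. -/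
def Invariant {M : Type*} [AddCommGroup M] [Module K M]
    (s p : M →ₗ[K] M →ₗ[K] M) (r : M ⊗[K] M) : Prop :=
  ∀ x : M,
    TensorProduct.map (p.flip x) (LinearMap.id : M →ₗ[K] M) r
      + TensorProduct.map (LinearMap.id : M →ₗ[K] M) ((s + p) x) r = 0 ∧
    TensorProduct.map ((s + p).flip x) (LinearMap.id : M →ₗ[K] M) r
      + TensorProduct.map (LinearMap.id : M →ₗ[K] M) (s x) r = 0

/-- `(a⊗b)⊗(c⊗d) ↦ (m a c) ⊗ b ⊗ d` : the product is placed in the first tensor slot,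
giving `r₁₂ ∗ r₁₃` when applied to `r ⊗ r`. -/
noncomputable def place1 {M : Type*} [AddCommGroup M] [Module K M]
    (m : M →ₗ[K] M →ₗ[K] M) :
    (M ⊗[K] M) ⊗[K] (M ⊗[K] M) →ₗ[K] M ⊗[K] (M ⊗[K] M) :=
  (TensorProduct.map (TensorProduct.lift m)
      (LinearMap.id : M ⊗[K] M →ₗ[K] M ⊗[K] M)) ∘ₗ
    (TensorProduct.tensorTensorTensorComm K M M M M).toLinearMap

/-- `(a⊗b)⊗(c⊗d) ↦ c ⊗ (m a d) ⊗ b` : the product in the second slot, giving `r₂₃ ∗ r₁₂`. -/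
noncomputable def place2 {M : Type*} [AddCommGroup M] [Module K M]
    (m : M →ₗ[K] M →ₗ[K] M) :
    (M ⊗[K] M) ⊗[K] (M ⊗[K] M) →ₗ[K] M ⊗[K] (M ⊗[K] M) :=
  (TensorProduct.leftComm K M M M).toLinearMap ∘ₗ
  (TensorProduct.map (LinearMap.id : M →ₗ[K] M) (TensorProduct.comm K M M).toLinearMap) ∘ₗ
  (TensorProduct.map (TensorProduct.lift m)
      (LinearMap.id : M ⊗[K] M →ₗ[K] M ⊗[K] M)) ∘ₗ
  (TensorProduct.tensorTensorTensorComm K M M M M).toLinearMap ∘ₗ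
  (TensorProduct.congr (LinearEquiv.refl K (M ⊗[K] M)) (TensorProduct.comm K M M)).toLinearMap

/-- `(a⊗b)⊗(c⊗d) ↦ a ⊗ c ⊗ (m b d)` : the product in the third slot, giving `r₁₃ ∗ r₂₃`. -/
noncomputable def place3 {M : Type*} [AddCommGroup M] [Module K M]
    (m : M →ₗ[K] M →ₗ[K] M) :
    (M ⊗[K] M) ⊗[K] (M ⊗[K] M) →ₗ[K] M ⊗[K] (M ⊗[K] M) :=
  (TensorProduct.assoc K M M M).toLinearMap ∘ₗ
  (TensorProduct.map (LinearMap.id : M ⊗[K] M →ₗ[K] M ⊗[K] M) (TensorProduct.lift m)) ∘ₗ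
  (TensorProduct.tensorTensorTensorComm K M M M M).toLinearMap

/-- `D(r) = r₁₂·r₁₃ + r₂₃≻r₁₂ - r₁₃≺r₂₃`. -/
noncomputable def adD {M : Type*} [AddCommGroup M] [Module K M]
    (s p : M →ₗ[K] M →ₗ[K] M) (r : M ⊗[K] M) : M ⊗[K] (M ⊗[K] M) :=
  place1 (s + p) (r ⊗ₜ[K] r) + place2 s (r ⊗ₜ[K] r) - place3 p (r ⊗ₜ[K] r)

/-- `D₁(r) = r₂₃·r₁₂ + r₁₃≻r₂₃ + r₁₂≺r₁₃`. -/
noncomputable def adD1 {M : Type*} [AddCommGroup M] [Module K M]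
    (s p : M →ₗ[K] M →ₗ[K] M) (r : M ⊗[K] M) : M ⊗[K] (M ⊗[K] M) :=
  place2 (s + p) (r ⊗ₜ[K] r) + place3 s (r ⊗ₜ[K] r) + place1 p (r ⊗ₜ[K] r)

/-- `D₂(r) = r₁₃·r₂₃ - r₁₂≻r₁₃ + r₂₃≺r₁₂`. -/
noncomputable def adD2 {M : Type*} [AddCommGroup M] [Module K M]
    (s p : M →ₗ[K] M →ₗ[K] M) (r : M ⊗[K] M) : M ⊗[K] (M ⊗[K] M) :=
  place3 (s + p) (r ⊗ₜ[K] r) - place1 s (r ⊗ₜ[K] r) + place2 p (r ⊗ₜ[K] r)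

/-- The anti-dendriform Yang-Baxter equation `D(r) = 0`. -/
noncomputable def AYBE {M : Type*} [AddCommGroup M] [Module K M]
    (s p : M →ₗ[K] M →ₗ[K] M) (r : M ⊗[K] M) : Prop :=
  adD s p r = 0

variable {A : Type*} [AddCommGroup A] [Module K A]


section AuxStmt10

variable {A : Type*} [AddCommGroup A] [Module K A]

lemma place1_tmul (m : A →ₗ[K] A →ₗ[K] A) (a b c d : A) :
    place1 (K := K) m ((a ⊗ₜ[K] b) ⊗ₜ[K] (c ⊗ₜ[K] d)) = (m a c) ⊗ₜ[K] (b ⊗ₜ[K] d) := by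
  simp [place1]

lemma place2_tmul (m : A →ₗ[K] A →ₗ[K] A) (a b c d : A) :
    place2 (K := K) m ((a ⊗ₜ[K] b) ⊗ₜ[K] (c ⊗ₜ[K] d)) = c ⊗ₜ[K] ((m a d) ⊗ₜ[K] b) := by
  simp [place2]

lemma place3_tmul (m : A →ₗ[K] A →ₗ[K] A) (a b c d : A) :
    place3 (K := K) m ((a ⊗ₜ[K] b) ⊗ₜ[K] (c ⊗ₜ[K] d)) = a ⊗ₜ[K] (c ⊗ₜ[K] (m b d)) := by
  simp [place3]

/-- cyclic permutation `x ⊗ y ⊗ z ↦ y ⊗ z ⊗ x`. -/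
noncomputable def cyc3 : A ⊗[K] (A ⊗[K] A) ≃ₗ[K] A ⊗[K] (A ⊗[K] A) :=
  (TensorProduct.comm K A (A ⊗[K] A)).trans (TensorProduct.assoc K A A A)

lemma cyc3_tmul (x y z : A) :
    cyc3 (K := K) (x ⊗ₜ[K] (y ⊗ₜ[K] z)) = y ⊗ₜ[K] (z ⊗ₜ[K] x) := by
  simp [cyc3]

/-- `c ⊗ d ↦ c ⊗ (d ⊗ y)`. -/
noncomputable def insR (y : A) : A ⊗[K] A →ₗ[K] A ⊗[K] (A ⊗[K] A) :=
  LinearMap.lTensor A ((TensorProduct.mk K A A).flip y)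

lemma insR_tmul (y c d : A) : insR (K := K) y (c ⊗ₜ[K] d) = c ⊗ₜ[K] (d ⊗ₜ[K] y) := by
  simp [insR]

/-- `c ⊗ d ↦ d ⊗ (y ⊗ c)`. -/
noncomputable def insM (y : A) : A ⊗[K] A →ₗ[K] A ⊗[K] (A ⊗[K] A) :=
  (LinearMap.lTensor A (TensorProduct.mk K A A y)) ∘ₗ (TensorProduct.comm K A A).toLinearMap

lemma insM_tmul (y c d : A) : insM (K := K) y (c ⊗ₜ[K] d) = d ⊗ₜ[K] (y ⊗ₜ[K] c) := by
  simp [insM]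

lemma keyBoth (s p : A →ₗ[K] A →ₗ[K] A) (r : A ⊗[K] A)
    (hinv : Invariant s p (r + tau r)) :
    adD1 s p r = - cyc3 (K := K) (cyc3 (K := K) (adD s p r)) ∧
    adD2 s p r = cyc3 (K := K) (adD s p r) := by
  obtain ⟨S, hr⟩ := TensorProduct.exists_finset (R := K) r
  have htau : tau (K := K) r = ∑ x ∈ S, x.2 ⊗ₜ[K] x.1 := by
    simp only [tau]
    rw [hr, map_sum]
    simp only [TensorProduct.comm_tmul]
  have hu : r + tau r = ∑ x ∈ S, (x.1 ⊗ₜ[K] x.2 + x.2 ⊗ₜ[K] x.1) := by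
    rw [htau, hr, ← Finset.sum_add_distrib]
  have hz1 : ∀ z : A, ∑ x ∈ S, (p x.1 z ⊗ₜ[K] x.2 + x.1 ⊗ₜ[K] (s z x.2 + p z x.2) +
      (p x.2 z ⊗ₜ[K] x.1 + x.2 ⊗ₜ[K] (s z x.1 + p z x.1))) = 0 := by
    intro z
    have hzz := (hinv z).1
    rw [hu, map_sum, map_sum, ← Finset.sum_add_distrib] at hzz
    rw [← hzz]
    refine Finset.sum_congr rfl fun x _ => ?_
    simp only [map_add, TensorProduct.map_tmul, LinearMap.add_apply, LinearMap.id_coe, id_eq,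
      LinearMap.flip_apply]
    abel
  have hz2 : ∀ z : A, ∑ x ∈ S, ((s x.1 z + p x.1 z) ⊗ₜ[K] x.2 + x.1 ⊗ₜ[K] s z x.2 +
      ((s x.2 z + p x.2 z) ⊗ₜ[K] x.1 + x.2 ⊗ₜ[K] s z x.1)) = 0 := by
    intro z
    have hzz := (hinv z).2
    rw [hu, map_sum, map_sum, ← Finset.sum_add_distrib] at hzz
    rw [← hzz]
    refine Finset.sum_congr rfl fun x _ => ?_
    simp only [map_add, TensorProduct.map_tmul, LinearMap.add_apply, LinearMap.id_coe, id_eq,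
      LinearMap.flip_apply]
    abel
  have main1 : adD1 s p r + cyc3 (K := K) (cyc3 (K := K) (adD s p r))
      = (∑ x ∈ S, ∑ y ∈ S,
          (x.2 ⊗ₜ[K] (p y.1 x.1 ⊗ₜ[K] y.2 + y.1 ⊗ₜ[K] (s x.1 y.2 + p x.1 y.2) + (p y.2 x.1 ⊗ₜ[K] y.1 + y.2 ⊗ₜ[K] (s x.1 y.1 + p x.1 y.1)))
          - insR (K := K) x.1 (p y.1 x.2 ⊗ₜ[K] y.2 + y.1 ⊗ₜ[K] (s x.2 y.2 + p x.2 y.2) + (p y.2 x.2 ⊗ₜ[K] y.1 + y.2 ⊗ₜ[K] (s x.2 y.1 + p x.2 y.1)))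
          + x.1 ⊗ₜ[K] (p y.1 x.2 ⊗ₜ[K] y.2 + y.1 ⊗ₜ[K] (s x.2 y.2 + p x.2 y.2) + (p y.2 x.2 ⊗ₜ[K] y.1 + y.2 ⊗ₜ[K] (s x.2 y.1 + p x.2 y.1)))
          - insM (K := K) x.1 (p y.1 x.2 ⊗ₜ[K] y.2 + y.1 ⊗ₜ[K] (s x.2 y.2 + p x.2 y.2) + (p y.2 x.2 ⊗ₜ[K] y.1 + y.2 ⊗ₜ[K] (s x.2 y.1 + p x.2 y.1)))
          + insR (K := K) x.2 ((s y.1 x.1 + p y.1 x.1) ⊗ₜ[K] y.2 + y.1 ⊗ₜ[K] s x.1 y.2 + ((s y.2 x.1 + p y.2 x.1) ⊗ₜ[K] y.1 + y.2 ⊗ₜ[K] s x.1 y.1))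
          - insM (K := K) x.2 ((s y.1 x.1 + p y.1 x.1) ⊗ₜ[K] y.2 + y.1 ⊗ₜ[K] s x.1 y.2 + ((s y.2 x.1 + p y.2 x.1) ⊗ₜ[K] y.1 + y.2 ⊗ₜ[K] s x.1 y.1))
          + insR (K := K) x.1 ((s y.1 x.2 + p y.1 x.2) ⊗ₜ[K] y.2 + y.1 ⊗ₜ[K] s x.2 y.2 + ((s y.2 x.2 + p y.2 x.2) ⊗ₜ[K] y.1 + y.2 ⊗ₜ[K] s x.2 y.1))))
        + ((∑ x ∈ S, ∑ y ∈ S, (x.1 ⊗ₜ[K] ((s y.1 x.2) ⊗ₜ[K] y.2) + y.1 ⊗ₜ[K] (x.1 ⊗ₜ[K] (s y.2 x.2)) + x.2 ⊗ₜ[K] ((s y.1 x.1) ⊗ₜ[K] y.2) + y.2 ⊗ₜ[K] (x.1 ⊗ₜ[K] (s y.1 x.2)) - x.2 ⊗ₜ[K] (y.1 ⊗ₜ[K] (p x.1 y.2)) - x.2 ⊗ₜ[K] ((p y.2 x.1) ⊗ₜ[K] y.1) - x.2 ⊗ₜ[K] (y.2 ⊗ₜ[K] (s x.1 y.1)) -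 x.2 ⊗ₜ[K] (y.2 ⊗ₜ[K] (p x.1 y.1)) + y.1 ⊗ₜ[K] ((p x.2 y.2) ⊗ₜ[K] x.1) - x.1 ⊗ₜ[K] (y.1 ⊗ₜ[K] (p x.2 y.2)) - x.1 ⊗ₜ[K] (y.2 ⊗ₜ[K] (s x.2 y.1)) - x.1 ⊗ₜ[K] (y.2 ⊗ₜ[K] (p x.2 y.1)) + (s x.2 y.2) ⊗ₜ[K] (x.1 ⊗ₜ[K] y.1) + (p x.2 y.2) ⊗ₜ[K] (x.1 ⊗ₜ[K] y.1) + (s x.2 y.1) ⊗ₜ[K] (x.1 ⊗ₜ[K] y.2) + (p x.2 y.1) ⊗ₜ[K] (x.1 ⊗ₜ[K] y.2) - (s y.1 x.1) ⊗ₜ[K] (y.2 ⊗ₜ[K] x.2) + (s x.1 y.2) ⊗ₜ[K] (x.2 ⊗ₜ[K] y.1))) - (∑ x ∈ S, ∑ y ∈ S, (y.1 ⊗ₜ[K] ((s x.1 y.2) ⊗ₜ[K] x.2) + x.1 ⊗ₜ[K] (y.1 ⊗ₜ[K] (s x.2 y.2)) + y.2 ⊗ₜ[K] ((s x.1 y.1)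 ⊗ₜ[K] x.2) + x.2 ⊗ₜ[K] (y.1 ⊗ₜ[K] (s x.1 y.2)) - y.2 ⊗ₜ[K] (x.1 ⊗ₜ[K] (p y.1 x.2)) - y.2 ⊗ₜ[K] ((p x.2 y.1) ⊗ₜ[K] x.1) - y.2 ⊗ₜ[K] (x.2 ⊗ₜ[K] (s y.1 x.1)) - y.2 ⊗ₜ[K] (x.2 ⊗ₜ[K] (p y.1 x.1)) + x.1 ⊗ₜ[K] ((p y.2 x.2) ⊗ₜ[K] y.1) - y.1 ⊗ₜ[K] (x.1 ⊗ₜ[K] (p y.2 x.2)) - y.1 ⊗ₜ[K] (x.2 ⊗ₜ[K] (s y.2 x.1)) - y.1 ⊗ₜ[K] (x.2 ⊗ₜ[K] (p y.2 x.1)) + (s y.2 x.2) ⊗ₜ[K] (y.1 ⊗ₜ[K] x.1) + (p y.2 x.2) ⊗ₜ[K] (y.1 ⊗ₜ[K] x.1) + (s y.2 x.1) ⊗ₜ[K] (y.1 ⊗ₜ[K] x.2) + (p y.2 x.1) ⊗ₜ[K] (y.1 ⊗ₜ[K] x.2) - (s x.1 y.1) ⊗ₜ[K] (x.2 ⊗ₜ[K]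 y.2) + (s y.1 x.2) ⊗ₜ[K] (y.2 ⊗ₜ[K] x.1)))) := by
    simp only [adD1, adD2, adD, hr, TensorProduct.sum_tmul, TensorProduct.tmul_sum,
      map_sum, map_add, map_sub, place1_tmul, place2_tmul, place3_tmul, cyc3_tmul]
    simp only [← Finset.sum_add_distrib, ← Finset.sum_sub_distrib]
    refine Finset.sum_congr rfl fun x _ => Finset.sum_congr rfl fun y _ => ?_
    simp only [map_add, insR_tmul, insM_tmul, LinearMap.add_apply,
      TensorProduct.tmul_add, TensorProduct.add_tmul]
    abel
  have z1_0 : ∑ x ∈ S, ∑ y ∈ S, (x.2 ⊗ₜ[K] (p y.1 x.1 ⊗ₜ[K] y.2 + y.1 ⊗ₜ[K] (s x.1 y.2 + p x.1 y.2) + (p y.2 x.1 ⊗ₜ[K] y.1 + y.2 ⊗ₜ[K] (s x.1 y.1 + p x.1 y.1)))) = (0 : A ⊗[K] (A ⊗[K] A)) := by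
    refine Finset.sum_eq_zero fun x _ => ?_
    rw [← TensorProduct.tmul_sum, hz1 x.1, TensorProduct.tmul_zero]
  have z1_1 : ∑ x ∈ S, ∑ y ∈ S, (insR (K := K) x.1 (p y.1 x.2 ⊗ₜ[K] y.2 + y.1 ⊗ₜ[K] (s x.2 y.2 + p x.2 y.2) + (p y.2 x.2 ⊗ₜ[K] y.1 + y.2 ⊗ₜ[K] (s x.2 y.1 + p x.2 y.1)))) = (0 : A ⊗[K] (A ⊗[K] A)) := by
    refine Finset.sum_eq_zero fun x _ => ?_
    rw [← map_sum, hz1 x.2, map_zero]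
  have z1_2 : ∑ x ∈ S, ∑ y ∈ S, (x.1 ⊗ₜ[K] (p y.1 x.2 ⊗ₜ[K] y.2 + y.1 ⊗ₜ[K] (s x.2 y.2 + p x.2 y.2) + (p y.2 x.2 ⊗ₜ[K] y.1 + y.2 ⊗ₜ[K] (s x.2 y.1 + p x.2 y.1)))) = (0 : A ⊗[K] (A ⊗[K] A)) := by
    refine Finset.sum_eq_zero fun x _ => ?_
    rw [← TensorProduct.tmul_sum, hz1 x.2, TensorProduct.tmul_zero]
  have z1_3 : ∑ x ∈ S, ∑ y ∈ S, (insM (K := K) x.1 (p y.1 x.2 ⊗ₜ[K] y.2 + y.1 ⊗ₜ[K] (s x.2 y.2 + p x.2 y.2) + (p y.2 x.2 ⊗ₜ[K] y.1 + y.2 ⊗ₜ[K] (s x.2 y.1 + p x.2 y.1)))) = (0 : A ⊗[K] (A ⊗[K] A)) := by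
    refine Finset.sum_eq_zero fun x _ => ?_
    rw [← map_sum, hz1 x.2, map_zero]
  have z1_4 : ∑ x ∈ S, ∑ y ∈ S, (insR (K := K) x.2 ((s y.1 x.1 + p y.1 x.1) ⊗ₜ[K] y.2 + y.1 ⊗ₜ[K] s x.1 y.2 + ((s y.2 x.1 + p y.2 x.1) ⊗ₜ[K] y.1 + y.2 ⊗ₜ[K] s x.1 y.1))) = (0 : A ⊗[K] (A ⊗[K] A)) := by
    refine Finset.sum_eq_zero fun x _ => ?_
    rw [← map_sum, hz2 x.1, map_zero]
  have z1_5 : ∑ x ∈ S, ∑ y ∈ S, (insM (K := K) x.2 ((s y.1 x.1 + p y.1 x.1) ⊗ₜ[K] y.2 + y.1 ⊗ₜ[K] s x.1 y.2 + ((s y.2 x.1 + p y.2 x.1) ⊗ₜ[K] y.1 + y.2 ⊗ₜ[K] s x.1 y.1))) = (0 : A ⊗[K] (A ⊗[K] A)) := by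
    refine Finset.sum_eq_zero fun x _ => ?_
    rw [← map_sum, hz2 x.1, map_zero]
  have z1_6 : ∑ x ∈ S, ∑ y ∈ S, (insR (K := K) x.1 ((s y.1 x.2 + p y.1 x.2) ⊗ₜ[K] y.2 + y.1 ⊗ₜ[K] s x.2 y.2 + ((s y.2 x.2 + p y.2 x.2) ⊗ₜ[K] y.1 + y.2 ⊗ₜ[K] s x.2 y.1))) = (0 : A ⊗[K] (A ⊗[K] A)) := by
    refine Finset.sum_eq_zero fun x _ => ?_
    rw [← map_sum, hz2 x.2, map_zero]
  have hG1 : (∑ x ∈ S, ∑ y ∈ S,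
      (x.2 ⊗ₜ[K] (p y.1 x.1 ⊗ₜ[K] y.2 + y.1 ⊗ₜ[K] (s x.1 y.2 + p x.1 y.2) + (p y.2 x.1 ⊗ₜ[K] y.1 + y.2 ⊗ₜ[K] (s x.1 y.1 + p x.1 y.1)))
          - insR (K := K) x.1 (p y.1 x.2 ⊗ₜ[K] y.2 + y.1 ⊗ₜ[K] (s x.2 y.2 + p x.2 y.2) + (p y.2 x.2 ⊗ₜ[K] y.1 + y.2 ⊗ₜ[K] (s x.2 y.1 + p x.2 y.1)))
          + x.1 ⊗ₜ[K] (p y.1 x.2 ⊗ₜ[K] y.2 + y.1 ⊗ₜ[K] (s x.2 y.2 + p x.2 y.2) + (p y.2 x.2 ⊗ₜ[K] y.1 + y.2 ⊗ₜ[K] (s x.2 y.1 + p x.2 y.1)))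
          - insM (K := K) x.1 (p y.1 x.2 ⊗ₜ[K] y.2 + y.1 ⊗ₜ[K] (s x.2 y.2 + p x.2 y.2) + (p y.2 x.2 ⊗ₜ[K] y.1 + y.2 ⊗ₜ[K] (s x.2 y.1 + p x.2 y.1)))
          + insR (K := K) x.2 ((s y.1 x.1 + p y.1 x.1) ⊗ₜ[K] y.2 + y.1 ⊗ₜ[K] s x.1 y.2 + ((s y.2 x.1 + p y.2 x.1) ⊗ₜ[K] y.1 + y.2 ⊗ₜ[K] s x.1 y.1))
          - insM (K := K) x.2 ((s y.1 x.1 + p y.1 x.1) ⊗ₜ[K] y.2 + y.1 ⊗ₜ[K] s x.1 y.2 + ((s y.2 x.1 + p y.2 x.1) ⊗ₜ[K] y.1 + y.2 ⊗ₜ[K] s x.1 y.1))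
          + insR (K := K) x.1 ((s y.1 x.2 + p y.1 x.2) ⊗ₜ[K] y.2 + y.1 ⊗ₜ[K] s x.2 y.2 + ((s y.2 x.2 + p y.2 x.2) ⊗ₜ[K] y.1 + y.2 ⊗ₜ[K] s x.2 y.1)))) = 0 := by
    simp only [Finset.sum_add_distrib, Finset.sum_sub_distrib]
    rw [z1_0, z1_1, z1_2, z1_3, z1_4, z1_5, z1_6]
    simp
  have hW1 : (∑ x ∈ S, ∑ y ∈ S, (y.1 ⊗ₜ[K] ((s x.1 y.2) ⊗ₜ[K] x.2) + x.1 ⊗ₜ[K] (y.1 ⊗ₜ[K] (s x.2 y.2)) + y.2 ⊗ₜ[K] ((s x.1 y.1) ⊗ₜ[K] x.2) + x.2 ⊗ₜ[K] (y.1 ⊗ₜ[K] (s x.1 y.2)) - y.2 ⊗ₜ[K] (x.1 ⊗ₜ[K] (p y.1 x.2)) - y.2 ⊗ₜ[K] ((p x.2 y.1) ⊗ₜ[K] x.1) - y.2 ⊗ₜ[K] (x.2 ⊗ₜ[K] (s y.1 x.1)) - y.2 ⊗ₜ[K] (x.2 ⊗ₜ[K] (p y.1 x.1)) + x.1 ⊗ₜ[K]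 ((p y.2 x.2) ⊗ₜ[K] y.1) - y.1 ⊗ₜ[K] (x.1 ⊗ₜ[K] (p y.2 x.2)) - y.1 ⊗ₜ[K] (x.2 ⊗ₜ[K] (s y.2 x.1)) - y.1 ⊗ₜ[K] (x.2 ⊗ₜ[K] (p y.2 x.1)) + (s y.2 x.2) ⊗ₜ[K] (y.1 ⊗ₜ[K] x.1) + (p y.2 x.2) ⊗ₜ[K] (y.1 ⊗ₜ[K] x.1) + (s y.2 x.1) ⊗ₜ[K] (y.1 ⊗ₜ[K] x.2) + (p y.2 x.1) ⊗ₜ[K] (y.1 ⊗ₜ[K] x.2) - (s x.1 y.1) ⊗ₜ[K] (x.2 ⊗ₜ[K] y.2) + (s y.1 x.2) ⊗ₜ[K] (y.2 ⊗ₜ[K] x.1))) = ∑ x ∈ S, ∑ y ∈ S, (x.1 ⊗ₜ[K] ((s y.1 x.2) ⊗ₜ[K] y.2) + y.1 ⊗ₜ[K] (x.1 ⊗ₜ[K] (s y.2 x.2)) + x.2 ⊗ₜ[K] ((s y.1 x.1) ⊗ₜ[K] y.2) + y.2 ⊗ₜ[K] (x.1 ⊗ₜ[K] (s y.1 x.2))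 - x.2 ⊗ₜ[K] (y.1 ⊗ₜ[K] (p x.1 y.2)) - x.2 ⊗ₜ[K] ((p y.2 x.1) ⊗ₜ[K] y.1) - x.2 ⊗ₜ[K] (y.2 ⊗ₜ[K] (s x.1 y.1)) - x.2 ⊗ₜ[K] (y.2 ⊗ₜ[K] (p x.1 y.1)) + y.1 ⊗ₜ[K] ((p x.2 y.2) ⊗ₜ[K] x.1) - x.1 ⊗ₜ[K] (y.1 ⊗ₜ[K] (p x.2 y.2)) - x.1 ⊗ₜ[K] (y.2 ⊗ₜ[K] (s x.2 y.1)) - x.1 ⊗ₜ[K] (y.2 ⊗ₜ[K] (p x.2 y.1)) + (s x.2 y.2) ⊗ₜ[K] (x.1 ⊗ₜ[K] y.1) + (p x.2 y.2) ⊗ₜ[K] (x.1 ⊗ₜ[K] y.1) + (s x.2 y.1) ⊗ₜ[K] (x.1 ⊗ₜ[K] y.2) + (p x.2 y.1) ⊗ₜ[K] (x.1 ⊗ₜ[K] y.2) - (s y.1 x.1) ⊗ₜ[K] (y.2 ⊗ₜ[K] x.2) + (s x.1 y.2) ⊗ₜ[K] (x.2 ⊗ₜ[K] y.1)) := by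
    rw [Finset.sum_comm]
  rw [hG1, hW1, sub_self, add_zero] at main1
  have main2 : adD2 s p r - cyc3 (K := K) (adD s p r)
      = (∑ x ∈ S, ∑ y ∈ S,
          (x.1 ⊗ₜ[K] (p y.1 x.2 ⊗ₜ[K] y.2 + y.1 ⊗ₜ[K] (s x.2 y.2 + p x.2 y.2) + (p y.2 x.2 ⊗ₜ[K] y.1 + y.2 ⊗ₜ[K] (s x.2 y.1 + p x.2 y.1)))
          - insM (K := K) x.2 ((s y.1 x.1 + p y.1 x.1) ⊗ₜ[K] y.2 + y.1 ⊗ₜ[K] s x.1 y.2 + ((s y.2 x.1 + p y.2 x.1) ⊗ₜ[K] y.1 + y.2 ⊗ₜ[K] s x.1 y.1))))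
        + ((∑ x ∈ S, ∑ y ∈ S, (y.1 ⊗ₜ[K] (x.1 ⊗ₜ[K] (s y.2 x.2)) + y.1 ⊗ₜ[K] (x.1 ⊗ₜ[K] (p y.2 x.2)) - (s y.1 x.1) ⊗ₜ[K] (y.2 ⊗ₜ[K] x.2) - (s y.1 x.2) ⊗ₜ[K] (y.2 ⊗ₜ[K] x.1) - x.1 ⊗ₜ[K] (y.2 ⊗ₜ[K] (s x.2 y.1)) - x.1 ⊗ₜ[K] (y.2 ⊗ₜ[K] (p x.2 y.1)))) - (∑ x ∈ S, ∑ y ∈ S, (x.1 ⊗ₜ[K] (y.1 ⊗ₜ[K] (s x.2 y.2)) + x.1 ⊗ₜ[K] (y.1 ⊗ₜ[K] (p x.2 y.2)) - (s x.1 y.1) ⊗ₜ[K] (x.2 ⊗ₜ[K] y.2) - (s x.1 y.2) ⊗ₜ[K] (x.2 ⊗ₜ[K] y.1) - y.1 ⊗ₜ[K] (x.2 ⊗ₜ[K] (s y.2 x.1)) - y.1 ⊗ₜ[K] (x.2 ⊗ₜ[K] (p y.2 x.1))))) := by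
    simp only [adD1, adD2, adD, hr, TensorProduct.sum_tmul, TensorProduct.tmul_sum,
      map_sum, map_add, map_sub, place1_tmul, place2_tmul, place3_tmul, cyc3_tmul]
    simp only [← Finset.sum_add_distrib, ← Finset.sum_sub_distrib]
    refine Finset.sum_congr rfl fun x _ => Finset.sum_congr rfl fun y _ => ?_
    simp only [map_add, insR_tmul, insM_tmul, LinearMap.add_apply,
      TensorProduct.tmul_add, TensorProduct.add_tmul]
    abel
  have z2_0 : ∑ x ∈ S, ∑ y ∈ S, (x.1 ⊗ₜ[K] (p y.1 x.2 ⊗ₜ[K] y.2 + y.1 ⊗ₜ[K] (s x.2 y.2 + p x.2 y.2) + (p y.2 x.2 ⊗ₜ[K] y.1 + y.2 ⊗ₜ[K] (s x.2 y.1 + p x.2 y.1)))) = (0 : A ⊗[K] (A ⊗[K] A)) := by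
    refine Finset.sum_eq_zero fun x _ => ?_
    rw [← TensorProduct.tmul_sum, hz1 x.2, TensorProduct.tmul_zero]
  have z2_1 : ∑ x ∈ S, ∑ y ∈ S, (insM (K := K) x.2 ((s y.1 x.1 + p y.1 x.1) ⊗ₜ[K] y.2 + y.1 ⊗ₜ[K] s x.1 y.2 + ((s y.2 x.1 + p y.2 x.1) ⊗ₜ[K] y.1 + y.2 ⊗ₜ[K] s x.1 y.1))) = (0 : A ⊗[K] (A ⊗[K] A)) := by
    refine Finset.sum_eq_zero fun x _ => ?_
    rw [← map_sum, hz2 x.1, map_zero]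
  have hG2 : (∑ x ∈ S, ∑ y ∈ S,
      (x.1 ⊗ₜ[K] (p y.1 x.2 ⊗ₜ[K] y.2 + y.1 ⊗ₜ[K] (s x.2 y.2 + p x.2 y.2) + (p y.2 x.2 ⊗ₜ[K] y.1 + y.2 ⊗ₜ[K] (s x.2 y.1 + p x.2 y.1)))
          - insM (K := K) x.2 ((s y.1 x.1 + p y.1 x.1) ⊗ₜ[K] y.2 + y.1 ⊗ₜ[K] s x.1 y.2 + ((s y.2 x.1 + p y.2 x.1) ⊗ₜ[K] y.1 + y.2 ⊗ₜ[K] s x.1 y.1)))) = 0 := by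
    simp only [Finset.sum_add_distrib, Finset.sum_sub_distrib]
    rw [z2_0, z2_1]
    simp
  have hW2 : (∑ x ∈ S, ∑ y ∈ S, (x.1 ⊗ₜ[K] (y.1 ⊗ₜ[K] (s x.2 y.2)) + x.1 ⊗ₜ[K] (y.1 ⊗ₜ[K] (p x.2 y.2)) - (s x.1 y.1) ⊗ₜ[K] (x.2 ⊗ₜ[K] y.2) - (s x.1 y.2) ⊗ₜ[K] (x.2 ⊗ₜ[K] y.1) - y.1 ⊗ₜ[K] (x.2 ⊗ₜ[K] (s y.2 x.1)) - y.1 ⊗ₜ[K] (x.2 ⊗ₜ[K] (p y.2 x.1)))) = ∑ x ∈ S, ∑ y ∈ S, (y.1 ⊗ₜ[K] (x.1 ⊗ₜ[K] (s y.2 x.2)) + y.1 ⊗ₜ[K] (x.1 ⊗ₜ[K] (p y.2 x.2)) - (s y.1 x.1) ⊗ₜ[K] (y.2 ⊗ₜ[K] x.2) - (s y.1 x.2) ⊗ₜ[K] (y.2 ⊗ₜ[K] x.1) - x.1 ⊗ₜ[K] (y.2 ⊗ₜ[K] (s x.2 y.1)) - x.1 ⊗ₜ[K] (y.2 ⊗ₜ[K]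 (p x.2 y.1))) := by
    rw [Finset.sum_comm]
  rw [hG2, hW2, sub_self, add_zero] at main2
  exact ⟨eq_neg_of_add_eq_zero_left main1, sub_eq_zero.mp main2⟩

end AuxStmt10

/-- if `r + τ(r)` is invariant then `D(r) = 0` iff
`D₁(r) = 0` and `D₂(r) = 0`. -/
theorem stmt10 [FiniteDimensional K A]
    (s p : A →ₗ[K] A →ₗ[K] A) (h : IsAntiDend s p) (r : A ⊗[K] A)
    (hinv : Invariant s p (r + tau r)) :
    adD s p r = 0 ↔ (adD1 s p r = 0 ∧ adD2 s p r = 0) := by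
  obtain ⟨k1, k2⟩ := keyBoth s p r hinv
  constructor
  · intro h0
    rw [k1, k2, h0]
    simp
  · rintro ⟨h1, h2⟩
    rw [h1] at k1
    have h3 : cyc3 (K := K) (cyc3 (K := K) (adD s p r)) = 0 := neg_eq_zero.mp k1.symm
    have h4 := (LinearEquiv.map_eq_zero_iff _).mp h3
    exact (LinearEquiv.map_eq_zero_iff _).mp h4
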